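/- Suppose φ_n, Δθ̃_n ∈ ℝ², f_{n-1}^{-1} symmetric positive definite, and w_n = Δθ̃_n^T φ_n, s_n = ε_n + (α_{n+1}/2) Δθ̃_n^T φ_n, where φ_n φ_n^T = β_n^{-1}(f_n^{-1} − α_n f_{n-1}^{-1}) and φ_n ε_n = (α_n/β_n) f_{n-1}^{-1} Δθ̃_n − (α_n/β_{n-1}) f_{n-1}^{-1} Δθ̃_{n-1}. If η_n := (2 − α_{n+1})/β_n − 1/β_{n-1} ≥ 0 for all n, and Δθ̃_0 = 0, f_0^{-1} = 0, then Σ_{n=1}^{2k} w_n s_n ≥ 0 for every k ≥ 1. -/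

import Mathlib

/-!
With `V n = α (n+1) / (2 β n) · Δₙᵀ fₙ⁻¹ Δₙ`, every summand satisfies `wₙ sₙ ≥ V n - V (n-1)`:
after substituting the two defining relations the `wₙ²` terms cancel, and the remainder is
`αₙ / (2 βₙ βₙ₋₁)` times `(ηₙ βₙ βₙ₋₁) Δₙᵀ fₙ₋₁⁻¹ Δₙ + βₙ (Δₙ - Δₙ₋₁)ᵀ fₙ₋₁⁻¹ (Δₙ - Δₙ₋₁)`.
The sum therefore telescopes to at least `V N - V 0 = V N ≥ 0`, as `f₀⁻¹ = 0`.
-/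

open Matrix Finset

section

variable {ι : Type*} [Fintype ι]

lemma dotProduct_vecMulVec_mulVec (x u v y : ι → ℝ) :
    x ⬝ᵥ vecMulVec u v *ᵥ y = (x ⬝ᵥ u) * (v ⬝ᵥ y) := by
  rw [vecMulVec_mulVec, op_smul_eq_smul, dotProduct_smul, smul_eq_mul, mul_comm]

lemma Matrix.PosSemidef.two_mul_dotProduct_mulVec_le {F : Matrix ι ι ℝ} (hF : F.PosSemidef)
    (x y : ι → ℝ) : 2 * (x ⬝ᵥ F *ᵥ y) ≤ x ⬝ᵥ F *ᵥ x + y ⬝ᵥ F *ᵥ y := by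
  have hsymm : y ⬝ᵥ F *ᵥ x = x ⬝ᵥ F *ᵥ y := by
    rw [dotProduct_mulVec, ← mulVec_transpose, ← conjTranspose_eq_transpose_of_trivial, hF.1.eq,
      dotProduct_comm]
  have h := hF.dotProduct_mulVec_nonneg (x - y)
  simp only [star_trivial, mulVec_sub, dotProduct_sub, sub_dotProduct, hsymm] at h
  linarith

lemma popov_storage_increment_le {F F' : Matrix ι ι ℝ} {φ x x' : ι → ℝ} {α α' β β₀ ε : ℝ}
    (hF : F.PosSemidef) (hα : 0 ≤ α) (hβ : 0 < β) (hβ₀ : 0 < β₀)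
    (hF' : F' = α • F + β • vecMulVec φ φ)
    (hε : ε • φ = (α / β) • F *ᵥ x' - (α / β₀) • F *ᵥ x)
    (hη : 0 ≤ (2 - α') / β - 1 / β₀) :
    α' / (2 * β) * (x' ⬝ᵥ F' *ᵥ x') - α / (2 * β₀) * (x ⬝ᵥ F *ᵥ x)
      ≤ (x' ⬝ᵥ φ) * (ε + α' / 2 * (x' ⬝ᵥ φ)) := by
  set q := x' ⬝ᵥ F *ᵥ x'
  set c := x' ⬝ᵥ F *ᵥ x
  set p := x ⬝ᵥ F *ᵥ x
  set w := x' ⬝ᵥ φ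
  have hq : 0 ≤ q := by simpa only [star_trivial] using hF.dotProduct_mulVec_nonneg x'
  have hcs : 0 ≤ q + p - 2 * c := by linarith [hF.two_mul_dotProduct_mulVec_le x' x]
  have hF'q : x' ⬝ᵥ F' *ᵥ x' = α * q + β * w ^ 2 := by
    rw [hF', add_mulVec, smul_mulVec, smul_mulVec, dotProduct_add, dotProduct_smul,
      dotProduct_smul, dotProduct_vecMulVec_mulVec, dotProduct_comm φ x', smul_eq_mul,
      smul_eq_mul, sq]
  have hwε : w * ε = α / β * q - α / β₀ * c := by
    simpa only [dotProduct_smul, dotProduct_sub, smul_eq_mul, mul_comm ε] using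
      congrArg (x' ⬝ᵥ ·) hε
  have hη' : 0 ≤ (2 - α') * β₀ - β := by
    have := (div_le_div_iff₀ hβ₀ hβ).mp (sub_nonneg.mp hη)
    linarith
  rw [hF'q, ← sub_nonneg]
  have hdecomp : w * (ε + α' / 2 * w) - (α' / (2 * β) * (α * q + β * w ^ 2) - α / (2 * β₀) * p)
      = α / (2 * β * β₀) * (((2 - α') * β₀ - β) * q + β * (q + p - 2 * c)) := by
    rw [mul_add, hwε]
    field_simp
    ring
  rw [hdecomp]
  exact mul_nonneg (by positivity) (add_nonneg (mul_nonneg hη' hq) (mul_nonneg hβ.le hcs))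

end

lemma sub_le_sum_Icc_of_sub_le {u g : ℕ → ℝ} (h : ∀ n, u (n + 1) - u n ≤ g (n + 1)) (N : ℕ) :
    u N - u 0 ≤ ∑ n ∈ Icc 1 N, g n := by
  induction N with
  | zero => simp
  | succ N ih =>
    rw [sum_Icc_succ_top (by omega)]
    linarith [h N]

theorem popov_inequality_nonlinear_block_general
    (α β : ℕ → ℝ) (hα : ∀ n, 0 < α n) (hβ : ∀ n, 0 < β n)
    (φ Δ : ℕ → (Fin 2 → ℝ)) (ε w s η : ℕ → ℝ)
    (fInv : ℕ → Matrix (Fin 2) (Fin 2) ℝ)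
    (hf0 : fInv 0 = 0)
    (hfrec : ∀ n : ℕ, 1 ≤ n → fInv n = α n • fInv (n - 1) + β n • vecMulVec (φ n) (φ n))
    (hfpsd : ∀ n, (fInv n).PosSemidef)
    (hφε : ∀ n : ℕ, 1 ≤ n →
      (ε n) • φ n = (α n / β n) • (fInv (n - 1)).mulVec (Δ n)
                  - (α n / β (n - 1)) • (fInv (n - 1)).mulVec (Δ (n - 1)))
    (hw : ∀ n, w n = Δ n ⬝ᵥ φ n)
    (hs : ∀ n, s n = ε n + (α (n + 1) / 2) * (Δ n ⬝ᵥ φ n))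
    (hη : ∀ n, η n = (2 - α (n + 1)) / β n - 1 / β (n - 1))
    (hηnonneg : ∀ n : ℕ, 1 ≤ n → 0 ≤ η n) :
    ∀ k : ℕ, 1 ≤ k → 0 ≤ ∑ n ∈ Finset.Icc 1 (2 * k), w n * s n := by
  intro k _
  set V : ℕ → ℝ := fun n => α (n + 1) / (2 * β n) * (Δ n ⬝ᵥ fInv n *ᵥ Δ n)
  have hV0 : V 0 = 0 := by simp [V, hf0]
  have hV : 0 ≤ V (2 * k) :=
    mul_nonneg (div_nonneg (hα _).le (by linarith [hβ (2 * k)]))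
      (by simpa only [star_trivial] using (hfpsd _).dotProduct_mulVec_nonneg _)
  have hstep : ∀ n, V (n + 1) - V n ≤ w (n + 1) * s (n + 1) := fun n => by
    rw [hw, hs]
    have hηn := hηnonneg (n + 1) (by omega)
    rw [hη] at hηn
    exact popov_storage_increment_le (hfpsd n) (hα _).le (hβ _) (hβ n) (hfrec (n + 1) (by omega))
      (hφε (n + 1) (by omega)) hηn
  linarith [sub_le_sum_Icc_of_sub_le (g := fun n => w n * s n) hstep (2 * k)]

/-- the Popov inequality Σ w_n s_n ≥ 0 for the nonlinear block. -/
theorem popov_inequality_nonlinear_block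
    (α β : ℕ → ℝ) (hα : ∀ n, 0 < α n) (hβ : ∀ n, 0 < β n)
    (hα1 : α 1 = 1) (hβ0 : β 0 = 1)
    (φ Δ : ℕ → (Fin 2 → ℝ)) (ε w s η : ℕ → ℝ)
    (fInv : ℕ → Matrix (Fin 2) (Fin 2) ℝ)
    (hf0 : fInv 0 = 0)
    (hfrec : ∀ n : ℕ, 1 ≤ n → fInv n = α n • fInv (n - 1) + β n • vecMulVec (φ n) (φ n))
    (hfpsd : ∀ n, (fInv n).PosSemidef)
    (hΔ0 : Δ 0 = 0)
    (hφε : ∀ n : ℕ, 1 ≤ n →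
      (ε n) • φ n = (α n / β n) • (fInv (n - 1)).mulVec (Δ n)
                  - (α n / β (n - 1)) • (fInv (n - 1)).mulVec (Δ (n - 1)))
    (hw : ∀ n, w n = Δ n ⬝ᵥ φ n)
    (hs : ∀ n, s n = ε n + (α (n + 1) / 2) * (Δ n ⬝ᵥ φ n))
    (hη : ∀ n, η n = (2 - α (n + 1)) / β n - 1 / β (n - 1))
    (hηnonneg : ∀ n : ℕ, 1 ≤ n → 0 ≤ η n) :
    ∀ k : ℕ, 1 ≤ k → 0 ≤ ∑ n ∈ Finset.Icc 1 (2 * k), w n * s n :=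
  popov_inequality_nonlinear_block_general α β hα hβ φ Δ ε w s η fInv hf0 hfrec hfpsd hφε hw hs hη
    hηnonneg
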